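/- arXiv:1912.01745 — 4 statements merged into one kernel-verified Lean document; each statement's English description precedes it below -/
import Mathlib

section
/- Let C, A₁, …, A_m ∈ 𝕊^n, b ∈ ℝ^m, and ε₀, ε₁, ε₂ ≥ 0. Suppose the pair (X̄, λ̄) is (ε₀,ε₁,ε₂)-approximately optimal for the SDP, i.e. X̄ ⪰ 0, ‖𝒜(X̄) − b‖ ≤ ε₀, ‖S(λ̄) X̄‖ ≤ ε₁, and S(λ̄) ⪰ −ε₂ I_n. Then for every X ∈ 𝕊^n with 𝒜(X) = b and X ⪰ 0, one has C • X̄ ≤ C • X + ε₀‖λ̄‖ + ε₁√n + ε₂‖X‖√n. -/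
open Matrix BigOperators

/-- Frobenius norm of a real matrix. -/
noncomputable def frob {n p : ℕ} (M : Matrix (Fin n) (Fin p) ℝ) : ℝ :=
  Real.sqrt (∑ i, ∑ j, (M i j) ^ 2)

/-- The linear map `𝒜 : 𝕊^n → ℝ^m`, `𝒜(X) = (A₁ • X, …, A_m • X)` with `A • B = tr(AB)`. -/
noncomputable def amap {n m : ℕ} (A : Fin m → Matrix (Fin n) (Fin n) ℝ)
    (X : Matrix (Fin n) (Fin n) ℝ) : EuclideanSpace ℝ (Fin m) :=
  WithLp.toLp 2 (fun i => (A i * X).trace : Fin m → ℝ)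

/-- The adjoint map `𝒜*(λ) = ∑ᵢ λᵢ Aᵢ`. -/
noncomputable def adjmap {n m : ℕ} (A : Fin m → Matrix (Fin n) (Fin n) ℝ)
    (lam : EuclideanSpace ℝ (Fin m)) : Matrix (Fin n) (Fin n) ℝ :=
  ∑ i, lam i • A i

lemma trace_nonneg_of_psd {n : ℕ} {M : Matrix (Fin n) (Fin n) ℝ} (h : M.PosSemidef) :
    0 ≤ M.trace := by
  rw [Matrix.trace]
  refine Finset.sum_nonneg fun i _ => ?_
  exact h.diag_nonneg

lemma trace_mul_nonneg_of_psd {n : ℕ} {S X : Matrix (Fin n) (Fin n) ℝ}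
    (hS : S.PosSemidef) (hX : X.PosSemidef) : 0 ≤ (S * X).trace := by
  obtain ⟨B, rfl⟩ : ∃ B : Matrix (Fin n) (Fin n) ℝ, X = star B * B := by
    open scoped MatrixOrder in exact CStarAlgebra.nonneg_iff_eq_star_mul_self.mp hX.nonneg
  rw [← mul_assoc, Matrix.trace_mul_comm, ← mul_assoc]
  exact trace_nonneg_of_psd (hS.mul_mul_conjTranspose_same B)

lemma trace_le_sqrt_frob {n : ℕ} (M : Matrix (Fin n) (Fin n) ℝ) :
    M.trace ≤ Real.sqrt n * frob M := by
  have h1 : M.trace ^ 2 ≤ (n : ℝ) * ∑ i, (M i i) ^ 2 := by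
    have := sq_sum_le_card_mul_sum_sq (s := Finset.univ) (f := fun i => M i i)
    simpa [Matrix.trace, Matrix.diag] using this
  have h2 : (∑ i, (M i i) ^ 2) ≤ ∑ i, ∑ j, (M i j) ^ 2 := by
    refine Finset.sum_le_sum fun i _ => ?_
    exact Finset.single_le_sum (f := fun j => (M i j) ^ 2) (fun j _ => sq_nonneg _)
      (Finset.mem_univ i)
  calc M.trace ≤ |M.trace| := le_abs_self _
    _ = Real.sqrt (M.trace ^ 2) := (Real.sqrt_sq_eq_abs _).symm
    _ ≤ Real.sqrt ((n : ℝ) * ∑ i, ∑ j, (M i j) ^ 2) := by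
        apply Real.sqrt_le_sqrt
        exact h1.trans (by nlinarith [Finset.sum_nonneg (fun i (_ : i ∈ Finset.univ) => sq_nonneg (M i i))] )
    _ = Real.sqrt n * frob M := by
        rw [frob, Real.sqrt_mul (Nat.cast_nonneg n)]

/-- If `(X̄, λ̄)` is `(ε₀,ε₁,ε₂)`-approximately optimal for the SDP
`min {C • X : 𝒜(X) = b, X ⪰ 0}`, then for every feasible `X`,
`C • X̄ ≤ C • X + ε₀‖λ̄‖ + ε₁√n + ε₂‖X‖√n`. -/
theorem approx_optimal_gap {n m : ℕ}
    (C : Matrix (Fin n) (Fin n) ℝ) (hC : C.IsSymm)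
    (A : Fin m → Matrix (Fin n) (Fin n) ℝ) (hA : ∀ i, (A i).IsSymm)
    (b : EuclideanSpace ℝ (Fin m))
    (ε₀ ε₁ ε₂ : ℝ) (hε₀ : 0 ≤ ε₀) (hε₁ : 0 ≤ ε₁) (hε₂ : 0 ≤ ε₂)
    (Xb : Matrix (Fin n) (Fin n) ℝ) (hXbs : Xb.IsSymm)
    (lamb : EuclideanSpace ℝ (Fin m))
    (hpsd : Xb.PosSemidef)
    (hfeas : ‖amap A Xb - b‖ ≤ ε₀)
    (hslack : frob ((C - adjmap A lamb) * Xb) ≤ ε₁)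
    (hdual : ((C - adjmap A lamb) + ε₂ • (1 : Matrix (Fin n) (Fin n) ℝ)).PosSemidef)
    (X : Matrix (Fin n) (Fin n) ℝ) (hXs : X.IsSymm)
    (hXfeas : amap A X = b) (hXpsd : X.PosSemidef) :
    (C * Xb).trace ≤ (C * X).trace + ε₀ * ‖lamb‖ + ε₁ * Real.sqrt n + ε₂ * frob X * Real.sqrt n := by
  set S := C - adjmap A lamb with hSdef
  have hexp : ∀ M : Matrix (Fin n) (Fin n) ℝ,
      (C * M).trace = (S * M).trace + ∑ i, lamb i * (A i * M).trace := by
    intro M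
    have hsum : adjmap A lamb * M = ∑ i, lamb i • (A i * M) := by
      simp [adjmap, Finset.sum_mul, smul_mul_assoc]
    rw [hSdef, Matrix.sub_mul, Matrix.trace_sub, hsum, Matrix.trace_sum]
    simp [Matrix.trace_smul, smul_eq_mul]
  -- slack term bound
  have h1 : (S * Xb).trace ≤ ε₁ * Real.sqrt n := by
    calc (S * Xb).trace ≤ Real.sqrt n * frob (S * Xb) := trace_le_sqrt_frob _
      _ ≤ Real.sqrt n * ε₁ := mul_le_mul_of_nonneg_left hslack (Real.sqrt_nonneg _)
      _ = ε₁ * Real.sqrt n := mul_comm _ _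
  -- dual slack bound
  have h2 : -(S * X).trace ≤ ε₂ * frob X * Real.sqrt n := by
    have h0 : 0 ≤ ((S + ε₂ • 1) * X).trace := trace_mul_nonneg_of_psd hdual hXpsd
    have heq : (S + ε₂ • 1) * X = S * X + ε₂ • X := by
      rw [Matrix.add_mul, Matrix.smul_mul, one_mul]
    rw [heq, Matrix.trace_add, Matrix.trace_smul] at h0
    have htrX : X.trace ≤ Real.sqrt n * frob X := trace_le_sqrt_frob X
    have : ε₂ * X.trace ≤ ε₂ * (Real.sqrt n * frob X) :=
      mul_le_mul_of_nonneg_left htrX hε₂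
    simp only [smul_eq_mul] at h0
    nlinarith
  -- primal feasibility bound
  have h3 : ∑ i, lamb i * ((A i * Xb).trace - b i) ≤ ε₀ * ‖lamb‖ := by
    have e1 : (inner ℝ lamb (amap A Xb - b) : ℝ)
        = ∑ i, lamb i * ((A i * Xb).trace - b i) := by
      simp [PiLp.inner_apply, RCLike.inner_apply, amap, mul_comm]
    calc ∑ i, lamb i * ((A i * Xb).trace - b i)
        = (inner ℝ lamb (amap A Xb - b) : ℝ) := e1.symm
      _ ≤ ‖lamb‖ * ‖amap A Xb - b‖ := real_inner_le_norm _ _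
      _ ≤ ‖lamb‖ * ε₀ := mul_le_mul_of_nonneg_left hfeas (norm_nonneg _)
      _ = ε₀ * ‖lamb‖ := mul_comm _ _
  have hb : ∀ i, (A i * X).trace = b i := fun i => by rw [← hXfeas]; rfl
  have hsplit : ∑ i, lamb i * (A i * Xb).trace
      = (∑ i, lamb i * ((A i * Xb).trace - b i)) + ∑ i, lamb i * b i := by
    rw [← Finset.sum_add_distrib]
    exact Finset.sum_congr rfl fun i _ => by ring
  have hXb : ∑ i, lamb i * (A i * X).trace = ∑ i, lamb i * b i :=
    Finset.sum_congr rfl fun i _ => by rw [hb i]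
  rw [hexp Xb, hexp X, hsplit, hXb]
  linarith
end

section
/- Let C, A₁, …, A_m ∈ 𝕊^n, b ∈ ℝ^m, ε₀,ε₁,ε₂ ≥ 0, γ > 0, and R_Y, R_λ > 0; set δ := ε₁‖𝒜‖/γ. Suppose (Y,λ), with Y ∈ ℝ^{n×p} (p ≤ n) and λ ∈ ℝ^m, is a spurious (ε,γ)-AFAC pair: (i) ‖𝒜(YYᵀ) − b‖ ≤ ε₀, ‖S(λ)Y‖ ≤ ε₁, and S(λ) • UUᵀ ≥ −ε₂ for every U ∈ ℝ^{n×p} with ‖U‖ = 1 and ‖𝒜(UYᵀ)‖ ≤ γ; (ii) the pair (YYᵀ, λ) is not (ε₀, R_Y ε₁, ε₂)-approximately optimal for the SDP; (iii) ‖Y‖ ≤ R_Y and ‖λ‖ ≤ R_λ. Then C lies in tube_δ(𝕊^n_{n−p}) + 𝒜*(B_λ), where B_λ = {λ' ∈ ℝ^m : ‖λ'‖ ≤ R_λ}; that is, there exist a symmetric matrix W of rank at most n−p, a matrix E with ‖E‖ ≤ δ, and λ' with ‖λ'‖ ≤ R_λ such that C = W + E + 𝒜*(λ'). -/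
open Matrix BigOperators

/-- Operator norm of `𝒜` (Frobenius norm on the domain, Euclidean norm on the codomain). -/
noncomputable def aOpNorm {n m : ℕ} (A : Fin m → Matrix (Fin n) (Fin n) ℝ) : ℝ :=
  sInf {c | 0 ≤ c ∧ ∀ X : Matrix (Fin n) (Fin n) ℝ, ‖amap A X‖ ≤ c * frob X}

/-! ### Auxiliary lemmas about the Frobenius norm -/

lemma frob_nonneg {n p : ℕ} (M : Matrix (Fin n) (Fin p) ℝ) : 0 ≤ frob M :=
  Real.sqrt_nonneg _

lemma frob_sum_nonneg {n p : ℕ} (M : Matrix (Fin n) (Fin p) ℝ) :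
    0 ≤ ∑ i, ∑ j, (M i j)^2 :=
  Finset.sum_nonneg fun _ _ => Finset.sum_nonneg fun _ _ => sq_nonneg _

lemma frob_sq {n p : ℕ} (M : Matrix (Fin n) (Fin p) ℝ) :
    frob M ^ 2 = ∑ i, ∑ j, (M i j) ^ 2 :=
  Real.sq_sqrt (frob_sum_nonneg M)

lemma frob_le_of_sq_le {n p : ℕ} {M : Matrix (Fin n) (Fin p) ℝ} {r : ℝ} (hr : 0 ≤ r)
    (h : ∑ i, ∑ j, (M i j)^2 ≤ r^2) : frob M ≤ r := by
  have := Real.sqrt_le_sqrt h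
  rwa [Real.sqrt_sq hr] at this

lemma frob_transpose {n p : ℕ} (M : Matrix (Fin n) (Fin p) ℝ) : frob Mᵀ = frob M := by
  unfold frob
  rw [Finset.sum_comm]
  rfl

lemma frob_eq_zero {n p : ℕ} {M : Matrix (Fin n) (Fin p) ℝ} (h : frob M = 0) : M = 0 := by
  have h2 : ∑ i, ∑ j, (M i j)^2 = 0 := by
    have := congrArg (· ^ 2) h
    simpa [frob_sq M] using this
  ext i j
  have hi := (Finset.sum_eq_zero_iff_of_nonneg
    (fun i _ => Finset.sum_nonneg fun j _ => sq_nonneg (M i j))).mp h2 i (Finset.mem_univ i)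
  have hj := (Finset.sum_eq_zero_iff_of_nonneg
    (fun j _ => sq_nonneg (M i j))).mp hi j (Finset.mem_univ j)
  simpa using pow_eq_zero_iff (n := 2) (by norm_num) |>.mp hj

lemma frob_mul_le {n p q : ℕ} (M : Matrix (Fin n) (Fin p) ℝ) (N : Matrix (Fin p) (Fin q) ℝ) :
    frob (M * N) ≤ frob M * frob N := by
  have h : ∑ i, ∑ j, ((M * N) i j)^2 ≤ (∑ i, ∑ k, (M i k)^2) * (∑ k, ∑ j, (N k j)^2) := by
    have hterm : ∀ i j, ((M * N) i j)^2 ≤ (∑ k, (M i k)^2) * (∑ k, (N k j)^2) := by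
      intro i j
      rw [Matrix.mul_apply]
      exact Finset.sum_mul_sq_le_sq_mul_sq Finset.univ _ _
    calc ∑ i, ∑ j, ((M * N) i j)^2
        ≤ ∑ i, ∑ j, (∑ k, (M i k)^2) * (∑ k, (N k j)^2) :=
          Finset.sum_le_sum fun i _ => Finset.sum_le_sum fun j _ => hterm i j
      _ = (∑ i, ∑ k, (M i k)^2) * (∑ k, ∑ j, (N k j)^2) := by
          rw [Finset.sum_mul]
          refine Finset.sum_congr rfl fun i _ => ?_
          rw [← Finset.mul_sum]
          congr 1
          exact Finset.sum_comm
  apply frob_le_of_sq_le (mul_nonneg (frob_nonneg M) (frob_nonneg N))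
  rw [mul_pow, frob_sq, frob_sq]
  exact h

/-! ### Auxiliary lemmas about `amap` and `aOpNorm` -/

lemma amap_norm_sq {n m : ℕ} (A : Fin m → Matrix (Fin n) (Fin n) ℝ)
    (X : Matrix (Fin n) (Fin n) ℝ) :
    ‖amap A X‖^2 = ∑ i, ((A i * X).trace)^2 := by
  rw [EuclideanSpace.norm_eq]
  rw [Real.sq_sqrt (Finset.sum_nonneg fun _ _ => sq_nonneg _)]
  refine Finset.sum_congr rfl fun i _ => ?_
  simp [amap, sq_abs]

lemma trace_sq_le {n : ℕ} (B X : Matrix (Fin n) (Fin n) ℝ) :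
    ((B * X).trace)^2 ≤ (∑ i, ∑ j, (B i j)^2) * (∑ i, ∑ j, (X i j)^2) := by
  have htr : (B * X).trace = ∑ jk : Fin n × Fin n, B jk.1 jk.2 * X jk.2 jk.1 := by
    rw [Matrix.trace, Fintype.sum_prod_type]
    simp [Matrix.diag, Matrix.mul_apply]
  have hB : ∑ jk : Fin n × Fin n, (B jk.1 jk.2)^2 = ∑ i, ∑ j, (B i j)^2 := by
    rw [Fintype.sum_prod_type]
  have hX : ∑ jk : Fin n × Fin n, (X jk.2 jk.1)^2 = ∑ i, ∑ j, (X i j)^2 := by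
    rw [Fintype.sum_prod_type]
    exact Finset.sum_comm
  rw [htr, ← hB, ← hX]
  exact Finset.sum_mul_sq_le_sq_mul_sq Finset.univ _ _

lemma aOpNorm_mem_nonempty {n m : ℕ} (A : Fin m → Matrix (Fin n) (Fin n) ℝ) :
    {c | 0 ≤ c ∧ ∀ X : Matrix (Fin n) (Fin n) ℝ, ‖amap A X‖ ≤ c * frob X}.Nonempty := by
  refine ⟨Real.sqrt (∑ i, ∑ j, ∑ k, (A i j k)^2), Real.sqrt_nonneg _, fun X => ?_⟩
  have h1 : ‖amap A X‖^2 ≤ (∑ i, ∑ j, ∑ k, (A i j k)^2) * frob X ^2 := by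
    rw [amap_norm_sq, frob_sq, Finset.sum_mul]
    exact Finset.sum_le_sum fun i _ => trace_sq_le (A i) X
  have h2 : ‖amap A X‖^2 ≤ (Real.sqrt (∑ i, ∑ j, ∑ k, (A i j k)^2) * frob X)^2 := by
    rw [mul_pow, Real.sq_sqrt (show (0:ℝ) ≤ ∑ i, ∑ j, ∑ k, (A i j k)^2 by positivity)]
    exact h1
  exact (pow_le_pow_iff_left₀ (norm_nonneg _)
    (mul_nonneg (Real.sqrt_nonneg _) (frob_nonneg X)) two_ne_zero).mp h2

lemma aOpNorm_nonneg {n m : ℕ} (A : Fin m → Matrix (Fin n) (Fin n) ℝ) : 0 ≤ aOpNorm A :=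
  Real.sInf_nonneg fun _ hc => hc.1

lemma amap_le {n m : ℕ} (A : Fin m → Matrix (Fin n) (Fin n) ℝ)
    (X : Matrix (Fin n) (Fin n) ℝ) : ‖amap A X‖ ≤ aOpNorm A * frob X := by
  rcases eq_or_lt_of_le (frob_nonneg X) with h0 | h0
  · have hX0 : X = 0 := frob_eq_zero h0.symm
    subst hX0
    have : amap A 0 = 0 := by
      ext i
      simp [amap]
    rw [this, ← h0]
    simp
  · have hlb : ‖amap A X‖ / frob X ≤ aOpNorm A := by
      apply le_csInf (aOpNorm_mem_nonempty A)
      intro c hc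
      rw [div_le_iff₀ h0]
      exact hc.2 X
    calc ‖amap A X‖ = (‖amap A X‖ / frob X) * frob X := by field_simp
    _ ≤ aOpNorm A * frob X := mul_le_mul_of_nonneg_right hlb (le_of_lt h0)

/-! ### A selection lemma (vertex argument for the Ky Fan-type bound) -/

lemma lp_select {n p : ℕ} (hpn : p ≤ n) (μ c : Fin n → ℝ) (hμ : ∀ i, 0 ≤ μ i)
    (hc0 : ∀ i, 0 ≤ c i) (hc1 : ∀ i, c i ≤ 1) (hcs : ∑ i, c i = (p : ℝ)) :
    ∃ J : Finset (Fin n), J.card = p ∧ ∑ i ∈ J, μ i ≤ ∑ i, μ i * c i := by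
  have hTne : (Finset.univ.powersetCard p : Finset (Finset (Fin n))).Nonempty := by
    apply Finset.powersetCard_nonempty.mpr
    simpa using hpn
  obtain ⟨J, hJT, hJmin⟩ := Finset.exists_min_image _ (fun K => ∑ i ∈ K, μ i) hTne
  have hJcard : J.card = p := (Finset.mem_powersetCard.mp hJT).2
  refine ⟨J, hJcard, ?_⟩
  rcases Finset.eq_empty_or_nonempty J with hJe | hJne
  · subst hJe
    simp only [Finset.sum_empty]
    exact Finset.sum_nonneg fun i _ => mul_nonneg (hμ i) (hc0 i)
  obtain ⟨j₀, hj₀J, hj₀max⟩ := Finset.exists_max_image J μ hJne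
  have hp1 : 1 ≤ p := hJcard ▸ Finset.card_pos.mpr hJne
  have hout : ∀ i ∉ J, μ j₀ ≤ μ i := by
    intro i hiJ
    by_contra hlt
    push_neg at hlt
    have hins : i ∉ J.erase j₀ := fun h => hiJ (Finset.mem_of_mem_erase h)
    set K := insert i (J.erase j₀) with hK
    have hKcard : K.card = p := by
      rw [hK, Finset.card_insert_of_notMem hins, Finset.card_erase_of_mem hj₀J, hJcard]
      omega
    have hKT : K ∈ Finset.univ.powersetCard p :=
      Finset.mem_powersetCard.mpr ⟨Finset.subset_univ K, hKcard⟩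
    have hKsum : ∑ x ∈ K, μ x = μ i + (∑ x ∈ J, μ x - μ j₀) := by
      rw [hK, Finset.sum_insert hins, Finset.sum_erase_eq_sub hj₀J]
    have := hJmin K hKT
    rw [hKsum] at this
    linarith
  have key : ∑ i ∈ J, μ i * (1 - c i) ≤ ∑ i ∈ Jᶜ, μ i * c i := by
    have h1 : ∑ i ∈ J, μ i * (1 - c i) ≤ ∑ i ∈ J, μ j₀ * (1 - c i) :=
      Finset.sum_le_sum fun i hi =>
        mul_le_mul_of_nonneg_right (hj₀max i hi) (by linarith [hc1 i])
    have hsplit : ∑ i ∈ J, c i + ∑ i ∈ Jᶜ, c i = (p : ℝ) := by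
      rw [Finset.sum_add_sum_compl]; exact hcs
    have h2 : ∑ i ∈ J, μ j₀ * (1 - c i) = μ j₀ * ∑ i ∈ Jᶜ, c i := by
      rw [← Finset.mul_sum]
      congr 1
      rw [Finset.sum_sub_distrib, Finset.sum_const, hJcard, nsmul_eq_mul, mul_one]
      linarith
    have h3 : μ j₀ * ∑ i ∈ Jᶜ, c i ≤ ∑ i ∈ Jᶜ, μ i * c i := by
      rw [Finset.mul_sum]
      exact Finset.sum_le_sum fun i hi =>
        mul_le_mul_of_nonneg_right (hout i (by simpa using hi)) (hc0 i)
    linarith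
  have hfull : ∑ i, μ i * c i = ∑ i ∈ J, μ i * c i + ∑ i ∈ Jᶜ, μ i * c i :=
    (Finset.sum_add_sum_compl J _).symm
  have hexp : ∑ i ∈ J, μ i * (1 - c i) = ∑ i ∈ J, μ i - ∑ i ∈ J, μ i * c i := by
    rw [← Finset.sum_sub_distrib]
    exact Finset.sum_congr rfl fun i _ => by ring
  linarith

/-! ### Matrix algebra helper lemmas -/

lemma trace_transpose_mul_self {n p : ℕ} (M : Matrix (Fin n) (Fin p) ℝ) :
    (Mᵀ * M).trace = ∑ i, ∑ j, (M i j)^2 := by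
  rw [Matrix.trace, Finset.sum_comm]
  refine Finset.sum_congr rfl fun i _ => ?_
  simp [Matrix.diag, Matrix.mul_apply, sq]

lemma trace_diagonal_mul' {n : ℕ} (d : Fin n → ℝ) (N : Matrix (Fin n) (Fin n) ℝ) :
    (Matrix.diagonal d * N).trace = ∑ i, d i * N i i := by
  rw [Matrix.trace]
  refine Finset.sum_congr rfl fun i _ => ?_
  simp [Matrix.diag, Matrix.diagonal_mul]

lemma diag_gram_nonneg {n q : ℕ} (N : Matrix (Fin q) (Fin n) ℝ) (i : Fin n) :
    0 ≤ (Nᵀ * N) i i := by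
  rw [Matrix.mul_apply]
  exact Finset.sum_nonneg fun k _ => by simpa [sq] using sq_nonneg (N k i)

lemma vecMulVec_mul {n p q : ℕ} (u : Fin n → ℝ) (v : Fin p → ℝ) (M : Matrix (Fin p) (Fin q) ℝ) :
    Matrix.vecMulVec u v * M = Matrix.vecMulVec u (Matrix.vecMul v M) := by
  ext i k
  simp [Matrix.mul_apply, Matrix.vecMulVec_apply, Matrix.vecMul, dotProduct,
    Finset.mul_sum, mul_assoc]

lemma frob_sq_vecMulVec {n p : ℕ} (u : Fin n → ℝ) (v : Fin p → ℝ) :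
    frob (Matrix.vecMulVec u v) ^2 = (∑ i, u i ^2) * (∑ j, v j ^2) := by
  rw [frob_sq]
  simp only [Matrix.vecMulVec_apply, mul_pow, ← Finset.mul_sum, ← Finset.sum_mul]

lemma trace_mul_vecMulVec {n : ℕ} (S : Matrix (Fin n) (Fin n) ℝ) (u w : Fin n → ℝ) :
    (S * Matrix.vecMulVec u w).trace = w ⬝ᵥ S.mulVec u := by
  rw [Matrix.trace]
  simp only [Matrix.diag, Matrix.mul_apply, Matrix.vecMulVec_apply, dotProduct,
    Matrix.mulVec, dotProduct]
  refine Finset.sum_congr rfl fun i _ => ?_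
  rw [Finset.mul_sum]
  refine Finset.sum_congr rfl fun k _ => by ring

lemma diag_conj {n p : ℕ} (M : Matrix (Fin n) (Fin p) ℝ) (B : Matrix (Fin p) (Fin p) ℝ)
    (i : Fin n) :
    (M * B * Mᵀ) i i = (fun j => M i j) ⬝ᵥ B.mulVec (fun j => M i j) := by
  simp only [Matrix.mul_apply, Matrix.transpose_apply, dotProduct, Matrix.mulVec,
    dotProduct, Finset.sum_mul, Finset.mul_sum]
  rw [Finset.sum_comm]
  exact Finset.sum_congr rfl fun j _ => Finset.sum_congr rfl fun k _ => by ring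

set_option maxHeartbeats 2000000 in
/-- If `(Y,λ)` is a spurious `(ε,γ)`-AFAC pair, then the cost matrix `C`
lies in `tube_δ(𝕊^n_{n−p}) + 𝒜*(B_λ)` with `δ = ε₁‖𝒜‖/γ`: there are a symmetric `W` with
`rank W ≤ n−p`, a matrix `E` with `‖E‖ ≤ δ` and `λ'` with `‖λ'‖ ≤ R_λ` such that
`C = W + E + 𝒜*(λ')`. -/
theorem spurious_afac_in_tube {n m p : ℕ} (hpn : p ≤ n)
    (C : Matrix (Fin n) (Fin n) ℝ) (hC : C.IsSymm)
    (A : Fin m → Matrix (Fin n) (Fin n) ℝ) (hA : ∀ i, (A i).IsSymm)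
    (b : EuclideanSpace ℝ (Fin m))
    (ε₀ ε₁ ε₂ γ RY Rlam δ : ℝ)
    (hε₀ : 0 ≤ ε₀) (hε₁ : 0 ≤ ε₁) (hε₂ : 0 ≤ ε₂) (hγ : 0 < γ) (hRY : 0 < RY) (hRlam : 0 < Rlam)
    (hδ : δ = ε₁ * aOpNorm A / γ)
    (Y : Matrix (Fin n) (Fin p) ℝ) (lam : EuclideanSpace ℝ (Fin m))
    -- (i) (Y,λ) is (ε,γ)-AFAC for (BM)
    (hfeas : ‖amap A (Y * Yᵀ) - b‖ ≤ ε₀)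
    (hcrit1 : frob ((C - adjmap A lam) * Y) ≤ ε₁)
    (hcrit2 : ∀ U : Matrix (Fin n) (Fin p) ℝ, frob U = 1 → ‖amap A (U * Yᵀ)‖ ≤ γ →
      -ε₂ ≤ ((C - adjmap A lam) * (U * Uᵀ)).trace)
    -- (ii) (YYᵀ, λ) is not (ε₀, R_Y ε₁, ε₂)-approximately optimal for (SDP)
    (hnotopt : ¬((Y * Yᵀ).PosSemidef ∧
      ‖amap A (Y * Yᵀ) - b‖ ≤ ε₀ ∧
      frob ((C - adjmap A lam) * (Y * Yᵀ)) ≤ RY * ε₁ ∧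
      ((C - adjmap A lam) + ε₂ • (1 : Matrix (Fin n) (Fin n) ℝ)).PosSemidef))
    -- (iii) norm bounds
    (hY : frob Y ≤ RY) (hlam : ‖lam‖ ≤ Rlam) :
    ∃ (W E : Matrix (Fin n) (Fin n) ℝ) (lam' : EuclideanSpace ℝ (Fin m)),
      W.IsSymm ∧ W.rank ≤ n - p ∧ frob E ≤ δ ∧ ‖lam'‖ ≤ Rlam ∧
      C = W + E + adjmap A lam' := by
  classical
  have ha0 : 0 ≤ aOpNorm A := aOpNorm_nonneg A
  have hδ0 : 0 ≤ δ := by rw [hδ]; positivity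
  set S : Matrix (Fin n) (Fin n) ℝ := C - adjmap A lam with hSdef
  have hadj : (adjmap A lam).IsSymm := by
    unfold Matrix.IsSymm adjmap
    rw [Matrix.transpose_sum]
    refine Finset.sum_congr rfl fun i _ => ?_
    rw [Matrix.transpose_smul, hA i]
  have hSt : Sᵀ = S := by
    rw [hSdef, Matrix.transpose_sub, hC, hadj]
  have hSsymm : S.IsSymm := hSt
  have hfrob0 : frob (0 : Matrix (Fin n) (Fin n) ℝ) = 0 := by
    unfold frob
    simp
  -- dispatch the degenerate case p = 0
  rcases Nat.eq_zero_or_pos p with hp0 | hp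
  · subst hp0
    refine ⟨S, 0, lam, hSsymm, ?_, by rw [hfrob0]; exact hδ0, hlam, by
      rw [hSdef]; abel⟩
    have := Matrix.rank_le_card_height S
    simpa using this
  -- main case: 1 ≤ p
  -- Step A: the PSD certificate condition must fail
  have hpsd : (Y * Yᵀ).PosSemidef := by
    have := Matrix.posSemidef_self_mul_conjTranspose Y
    simpa using this
  have hthird : frob (S * (Y * Yᵀ)) ≤ RY * ε₁ := by
    rw [← Matrix.mul_assoc]
    calc frob (S * Y * Yᵀ) ≤ frob (S * Y) * frob Yᵀ := frob_mul_le _ _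
      _ ≤ ε₁ * RY := mul_le_mul hcrit1 (by rwa [frob_transpose]) (frob_nonneg _) hε₁
      _ = RY * ε₁ := mul_comm _ _
  have h4 : ¬ (S + ε₂ • (1 : Matrix (Fin n) (Fin n) ℝ)).PosSemidef :=
    fun h => hnotopt ⟨hpsd, hfeas, hthird, h⟩
  have hTherm : (S + ε₂ • (1 : Matrix (Fin n) (Fin n) ℝ)).IsHermitian := by
    show (S + ε₂ • (1 : Matrix (Fin n) (Fin n) ℝ)).IsSymm
    unfold Matrix.IsSymm
    rw [Matrix.transpose_add, hSt, Matrix.transpose_smul, Matrix.transpose_one]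
  -- Step B: find a unit direction of negative curvature
  rw [Matrix.posSemidef_iff_dotProduct_mulVec] at h4
  push_neg at h4
  obtain ⟨x, hx⟩ := h4 hTherm
  have hx' : x ⬝ᵥ S.mulVec x + ε₂ * (∑ i, x i ^2) < 0 := by
    have h5 : x ⬝ᵥ (S + ε₂ • (1 : Matrix (Fin n) (Fin n) ℝ)).mulVec x < 0 := by
      simpa using hx
    have h6 : x ⬝ᵥ (S + ε₂ • (1 : Matrix (Fin n) (Fin n) ℝ)).mulVec x
        = x ⬝ᵥ S.mulVec x + ε₂ * (∑ i, x i ^2) := by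
      rw [Matrix.add_mulVec, dotProduct_add, Matrix.smul_mulVec,
        Matrix.one_mulVec, dotProduct_smul]
      congr 1
      rw [smul_eq_mul]
      congr 1
      simp [dotProduct, sq]
    rwa [h6] at h5
  have hxs : 0 < ∑ i, x i ^2 := by
    rcases (Finset.sum_nonneg fun i _ => sq_nonneg (x i)).lt_or_eq with h | h
    · exact h
    · exfalso
      have hx0 : x = 0 := by
        funext i
        have := (Finset.sum_eq_zero_iff_of_nonneg fun i _ => sq_nonneg (x i)).mp h.symm
          i (Finset.mem_univ i)
        simpa using pow_eq_zero_iff (n := 2) (by norm_num) |>.mp this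
      rw [hx0] at hx'
      simp at hx'
  set nx : ℝ := Real.sqrt (∑ i, x i ^2) with hnx
  have hnxpos : 0 < nx := Real.sqrt_pos.mpr hxs
  set u : Fin n → ℝ := nx⁻¹ • x with hu
  have hu2 : ∑ i, u i ^2 = 1 := by
    have h1 : ∑ i, u i ^2 = nx⁻¹^2 * ∑ i, x i ^2 := by
      rw [hu, Finset.mul_sum]
      exact Finset.sum_congr rfl fun i _ => by
        simp only [Pi.smul_apply, smul_eq_mul]
        ring
    rw [h1, hnx, inv_pow, Real.sq_sqrt hxs.le]
    exact inv_mul_cancel₀ hxs.ne'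
  have huS : u ⬝ᵥ S.mulVec u < -ε₂ := by
    have hlin : u ⬝ᵥ S.mulVec u = nx⁻¹^2 * (x ⬝ᵥ S.mulVec x) := by
      rw [hu, Matrix.mulVec_smul, smul_dotProduct, dotProduct_smul,
        smul_eq_mul, smul_eq_mul]
      ring
    have hnx2 : nx⁻¹^2 = (∑ i, x i ^2)⁻¹ := by
      rw [inv_pow, hnx, Real.sq_sqrt hxs.le]
    rw [hlin, hnx2]
    have hlt : x ⬝ᵥ S.mulVec x < -ε₂ * (∑ i, x i ^2) := by linarith
    calc (∑ i, x i ^2)⁻¹ * (x ⬝ᵥ S.mulVec x)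
        < (∑ i, x i ^2)⁻¹ * (-ε₂ * (∑ i, x i ^2)) := by
          exact mul_lt_mul_of_pos_left hlt (inv_pos.mpr hxs)
      _ = -ε₂ := by field_simp
  -- Step C: Y is uniformly non-degenerate on unit directions
  have hunit : ∀ v : Fin p → ℝ, (∑ j, v j ^2) = 1 →
      γ < aOpNorm A * frob (Matrix.vecMulVec u (Y.mulVec v)) := by
    intro v hv
    set U : Matrix (Fin n) (Fin p) ℝ := Matrix.vecMulVec u v with hU
    have hUf : frob U = 1 := by
      have h1 := frob_sq_vecMulVec u v
      rw [hu2, hv, mul_one] at h1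
      nlinarith [frob_nonneg U, h1]
    have hUt : Uᵀ = Matrix.vecMulVec v u := by
      ext i j
      simp [hU, Matrix.vecMulVec_apply, mul_comm]
    have hUUt : U * Uᵀ = Matrix.vecMulVec u u := by
      ext i k
      simp only [hU, Matrix.mul_apply, Matrix.transpose_apply, Matrix.vecMulVec_apply]
      have : ∑ j, u i * v j * (u k * v j) = (∑ j, v j ^ 2) * (u i * u k) := by
        rw [Finset.sum_mul]
        exact Finset.sum_congr rfl fun j _ => by ring
      rw [this, hv, one_mul]
    have htr : (S * (U * Uᵀ)).trace = u ⬝ᵥ S.mulVec u := by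
      rw [hUUt, trace_mul_vecMulVec]
    have hnot : ¬ ‖amap A (U * Yᵀ)‖ ≤ γ := by
      intro hle
      have := hcrit2 U hUf hle
      rw [htr] at this
      linarith
    push_neg at hnot
    have hUY : U * Yᵀ = Matrix.vecMulVec u (Y.mulVec v) := by
      rw [hU, _root_.vecMulVec_mul, Matrix.vecMul_transpose]
    calc γ < ‖amap A (U * Yᵀ)‖ := hnot
      _ ≤ aOpNorm A * frob (U * Yᵀ) := amap_le A _
      _ = aOpNorm A * frob (Matrix.vecMulVec u (Y.mulVec v)) := by rw [hUY]
  have haA : 0 < aOpNorm A := by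
    rcases ha0.lt_or_eq with h | h
    · exact h
    · exfalso
      set v : Fin p → ℝ := Pi.single ⟨0, hp⟩ 1 with hv
      have hv1 : ∑ j, v j ^2 = 1 := by
        rw [hv]
        simp [Pi.single_apply]
      have := hunit v hv1
      rw [← h] at this
      simp at this
      linarith
  have hstep3 : ∀ v : Fin p → ℝ,
      γ^2 * (∑ j, v j ^2) ≤ (aOpNorm A)^2 * (∑ i, (Y.mulVec v) i ^2) := by
    intro v
    rcases eq_or_ne v 0 with hv0 | hv0
    · subst hv0
      simp [Matrix.mulVec_zero]
    · have hvs : 0 < ∑ j, v j ^2 := by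
        rcases (Finset.sum_nonneg fun j _ => sq_nonneg (v j)).lt_or_eq with h | h
        · exact h
        · exfalso
          apply hv0
          funext j
          have := (Finset.sum_eq_zero_iff_of_nonneg fun j _ => sq_nonneg (v j)).mp h.symm
            j (Finset.mem_univ j)
          simpa using pow_eq_zero_iff (n := 2) (by norm_num) |>.mp this
      set c : ℝ := (Real.sqrt (∑ j, v j ^2))⁻¹ with hc
      have hcpos : 0 < c := inv_pos.mpr (Real.sqrt_pos.mpr hvs)
      have hc2 : c^2 * (∑ j, v j ^2) = 1 := by
        rw [hc, inv_pow, Real.sq_sqrt hvs.le]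
        field_simp
      have hv1 : ∑ j, (c • v) j ^2 = 1 := by
        simp only [Pi.smul_apply, smul_eq_mul, mul_pow]
        rw [← Finset.mul_sum]
        exact hc2
      have h1 := hunit (c • v) hv1
      have hT0 : (0:ℝ) ≤ ∑ i, (Y.mulVec v) i ^2 := Finset.sum_nonneg fun _ _ => sq_nonneg _
      have hfr : frob (Matrix.vecMulVec u (Y.mulVec (c • v)))
          = Real.sqrt (c^2 * ∑ i, (Y.mulVec v) i ^2) := by
        rw [Matrix.mulVec_smul]
        have h2 := frob_sq_vecMulVec u (c • Y.mulVec v)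
        rw [hu2, one_mul] at h2
        have h3 : ∑ i, (c • Y.mulVec v) i ^2 = c^2 * ∑ i, (Y.mulVec v) i ^2 := by
          simp only [Pi.smul_apply, smul_eq_mul, mul_pow]
          rw [← Finset.mul_sum]
        rw [h3] at h2
        rw [← Real.sqrt_sq (frob_nonneg _), h2]
      rw [hfr] at h1
      have hs0 : (0:ℝ) ≤ c^2 * ∑ i, (Y.mulVec v) i ^2 := by positivity
      have hss := Real.sq_sqrt hs0
      have hsn := Real.sqrt_nonneg (c^2 * ∑ i, (Y.mulVec v) i ^2)
      have h5 : γ^2 < (aOpNorm A)^2 * (c^2 * ∑ i, (Y.mulVec v) i ^2) := by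
        nlinarith [h1, hγ, hss, hsn, haA]
      have h7 : γ^2 * (∑ j, v j ^2)
          < (aOpNorm A)^2 * (∑ i, (Y.mulVec v) i ^2) := by
        calc γ^2 * (∑ j, v j ^2)
            < (aOpNorm A)^2 * (c^2 * ∑ i, (Y.mulVec v) i ^2) * (∑ j, v j ^2) :=
              mul_lt_mul_of_pos_right h5 hvs
          _ = (aOpNorm A)^2 * (∑ i, (Y.mulVec v) i ^2) * (c^2 * (∑ j, v j ^2)) := by ring
          _ = (aOpNorm A)^2 * (∑ i, (Y.mulVec v) i ^2) := by rw [hc2, mul_one]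
      exact h7.le
  -- Step D: the Gram matrix of Y is positive definite with controlled inverse
  have hG : (Yᵀ * Y)ᵀ = Yᵀ * Y := by
    rw [Matrix.transpose_mul, Matrix.transpose_transpose]
  have hGquad : ∀ v : Fin p → ℝ, v ⬝ᵥ (Yᵀ * Y).mulVec v = ∑ i, (Y.mulVec v) i ^2 := by
    intro v
    rw [← Matrix.mulVec_mulVec, dotProduct_mulVec, Matrix.vecMul_transpose]
    simp [dotProduct, sq]
  have hGpd : (Yᵀ * Y).PosDef := by
    refine Matrix.posDef_iff_dotProduct_mulVec.mpr ⟨hG, fun v hv0 => ?_⟩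
    have hvs : 0 < ∑ j, v j ^2 := by
      rcases (Finset.sum_nonneg fun j _ => sq_nonneg (v j)).lt_or_eq with h | h
      · exact h
      · exfalso
        apply hv0
        funext j
        have := (Finset.sum_eq_zero_iff_of_nonneg fun j _ => sq_nonneg (v j)).mp h.symm
          j (Finset.mem_univ j)
        simpa using pow_eq_zero_iff (n := 2) (by norm_num) |>.mp this
    have h1 := hstep3 v
    have h2 : star v ⬝ᵥ (Yᵀ * Y) *ᵥ v = v ⬝ᵥ (Yᵀ * Y).mulVec v := by
      congr 1
    rw [h2, hGquad v]
    nlinarith [h1, mul_pos (pow_pos hγ 2) hvs, sq_nonneg (aOpNorm A)]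
  have hdet : IsUnit (Yᵀ * Y).det := isUnit_iff_ne_zero.mpr hGpd.det_pos.ne'
  set B : Matrix (Fin p) (Fin p) ℝ := (Yᵀ * Y)⁻¹ with hBdef
  have hBG : B * (Yᵀ * Y) = 1 := Matrix.nonsing_inv_mul _ hdet
  have hGB : (Yᵀ * Y) * B = 1 := Matrix.mul_nonsing_inv _ hdet
  have hBt : Bᵀ = B := by rw [hBdef, Matrix.transpose_nonsing_inv, hG]
  have hBG2 : Yᵀ * (Y * B) = 1 := by rw [← Matrix.mul_assoc]; exact hGB
  have hBquad : ∀ x : Fin p → ℝ,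
      x ⬝ᵥ B.mulVec x ≤ (aOpNorm A / γ)^2 * ∑ j, x j ^2 := by
    intro x
    set y : Fin p → ℝ := B.mulVec x with hy
    have hGy : (Yᵀ * Y).mulVec y = x := by
      rw [hy, Matrix.mulVec_mulVec, hGB, Matrix.one_mulVec]
    have h1 : γ^2 * (∑ j, y j ^2) ≤ (aOpNorm A)^2 * (∑ i, (Y.mulVec y) i ^2) := hstep3 y
    have h2 : ∑ i, (Y.mulVec y) i ^2 = x ⬝ᵥ y := by
      rw [← hGquad y, hGy]
      exact dotProduct_comm y x ▸ rfl
    rw [h2] at h1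
    have hxB : x ⬝ᵥ B.mulVec x = x ⬝ᵥ y := by rw [hy]
    rw [hxB]
    have hCS : (∑ j, x j * y j)^2 ≤ (∑ j, x j ^2) * (∑ j, y j ^2) :=
      Finset.sum_mul_sq_le_sq_mul_sq Finset.univ x y
    have hqdef : x ⬝ᵥ y = ∑ j, x j * y j := rfl
    have hSx0 : (0:ℝ) ≤ ∑ j, x j ^2 := Finset.sum_nonneg fun _ _ => sq_nonneg _
    have hSy0 : (0:ℝ) ≤ ∑ j, y j ^2 := Finset.sum_nonneg fun _ _ => sq_nonneg _
    rcases le_or_gt (x ⬝ᵥ y) 0 with hq0 | hq0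
    · exact le_trans hq0 (by positivity)
    · have key : γ^2 * (x ⬝ᵥ y) ≤ (aOpNorm A)^2 * (∑ j, x j ^2) := by
        have k1 : γ^2 * (x ⬝ᵥ y)^2 ≤ (∑ j, x j ^2) * (γ^2 * (∑ j, y j ^2)) := by
          rw [hqdef]
          nlinarith [hCS, sq_nonneg γ]
        have k2 : (∑ j, x j ^2) * (γ^2 * (∑ j, y j ^2))
            ≤ (∑ j, x j ^2) * ((aOpNorm A)^2 * (x ⬝ᵥ y)) :=
          mul_le_mul_of_nonneg_left h1 hSx0
        have k3 : (γ^2 * (x ⬝ᵥ y)) * (x ⬝ᵥ y)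
            ≤ ((aOpNorm A)^2 * (∑ j, x j ^2)) * (x ⬝ᵥ y) := by nlinarith [k1, k2]
        exact le_of_mul_le_mul_right k3 hq0
      have hγ2 : (0:ℝ) < γ^2 := by positivity
      calc x ⬝ᵥ y ≤ (aOpNorm A)^2 * (∑ j, x j ^2) / γ^2 :=
            (le_div_iff₀ hγ2).mpr (by linarith [key])
        _ = (aOpNorm A / γ)^2 * ∑ j, x j ^2 := by ring
  -- Step E: spectral decomposition of S
  have hSherm : S.IsHermitian := hSsymm
  obtain ⟨V, d, hV1, hV2, hspec⟩ :
      ∃ (V : Matrix (Fin n) (Fin n) ℝ) (d : Fin n → ℝ),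
        Vᵀ * V = 1 ∧ V * Vᵀ = 1 ∧ S = V * Matrix.diagonal d * Vᵀ := by
    refine ⟨hSherm.eigenvectorUnitary, hSherm.eigenvalues, ?_, ?_, ?_⟩
    · have h2 : star (hSherm.eigenvectorUnitary : Matrix (Fin n) (Fin n) ℝ) *
          (hSherm.eigenvectorUnitary : Matrix (Fin n) (Fin n) ℝ) = 1 :=
        Unitary.coe_star_mul_self _
      rw [star_eq_conjTranspose] at h2
      simpa using h2
    · have h2 : (hSherm.eigenvectorUnitary : Matrix (Fin n) (Fin n) ℝ) *
          star (hSherm.eigenvectorUnitary : Matrix (Fin n) (Fin n) ℝ) = 1 :=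
        Unitary.coe_mul_star_self _
      rw [star_eq_conjTranspose] at h2
      simpa using h2
    · have := hSherm.spectral_theorem
      simpa [star_eq_conjTranspose] using this
  -- Step F: the compression coefficients
  set P : Matrix (Fin n) (Fin n) ℝ := Y * B * Yᵀ with hP
  have hPt : Pᵀ = P := by
    rw [hP, Matrix.transpose_mul, Matrix.transpose_mul, Matrix.transpose_transpose, hBt,
      ← Matrix.mul_assoc]
  have hPP : P * P = P := by
    rw [hP]
    calc (Y * B * Yᵀ) * (Y * B * Yᵀ) = Y * (B * (Yᵀ * Y) * B) * Yᵀ := by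
          simp only [Matrix.mul_assoc]
      _ = Y * B * Yᵀ := by rw [hBG, Matrix.one_mul]
  have hPtP : Pᵀ * P = P := by rw [hPt, hPP]
  have htrP : P.trace = (p : ℝ) := by
    rw [hP, Matrix.trace_mul_comm (Y * B) Yᵀ, hBG2, Matrix.trace_one]
    simp
  -- the compression coefficients c i
  set cf : Fin n → ℝ := fun i => (Vᵀ * P * V) i i with hcf
  have hc0 : ∀ i, 0 ≤ cf i := by
    intro i
    have e : (P * V)ᵀ * (P * V) = Vᵀ * P * V := by
      calc (P * V)ᵀ * (P * V) = Vᵀ * (Pᵀ * P) * V := by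
            rw [Matrix.transpose_mul]
            simp only [Matrix.mul_assoc]
        _ = Vᵀ * P * V := by rw [hPtP]
    have h := diag_gram_nonneg (P * V) i
    rw [e] at h
    exact h
  have hc1 : ∀ i, cf i ≤ 1 := by
    intro i
    have hQt : (1 - P)ᵀ = 1 - P := by
      rw [Matrix.transpose_sub, Matrix.transpose_one, hPt]
    have hQQ : (1 - P) * (1 - P) = 1 - P := by
      have h' : (1 - P) * (1 - P) = 1 - P - P + P * P := by noncomm_ring
      rw [h', hPP]
      abel
    have e : ((1 - P) * V)ᵀ * ((1 - P) * V) = Vᵀ * (1 - P) * V := by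
      calc ((1 - P) * V)ᵀ * ((1 - P) * V) = Vᵀ * ((1 - P)ᵀ * (1 - P)) * V := by
            rw [Matrix.transpose_mul]
            simp only [Matrix.mul_assoc]
        _ = Vᵀ * (1 - P) * V := by rw [hQt, hQQ]
    have e2 : Vᵀ * (1 - P) * V = 1 - Vᵀ * P * V := by
      rw [Matrix.mul_sub, Matrix.mul_one, Matrix.sub_mul, hV1]
    have h := diag_gram_nonneg ((1 - P) * V) i
    rw [e, e2] at h
    have h3 : (1 - Vᵀ * P * V) i i = 1 - cf i := by
      rw [Matrix.sub_apply, Matrix.one_apply_eq]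
    rw [h3] at h
    linarith
  have hsumc : ∑ i, cf i = (p : ℝ) := by
    have h1 : ∑ i, cf i = (Vᵀ * P * V).trace := rfl
    rw [h1, Matrix.trace_mul_comm (Vᵀ * P) V, ← Matrix.mul_assoc, hV2, Matrix.one_mul, htrP]
  -- the key trace inequality
  have hSS : S * S = V * Matrix.diagonal (fun i => d i ^ 2) * Vᵀ := by
    rw [hspec]
    calc (V * Matrix.diagonal d * Vᵀ) * (V * Matrix.diagonal d * Vᵀ)
        = V * (Matrix.diagonal d * (Vᵀ * V) * Matrix.diagonal d) * Vᵀ := by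
          simp only [Matrix.mul_assoc]
      _ = V * Matrix.diagonal (fun i => d i ^ 2) * Vᵀ := by
          rw [hV1, Matrix.mul_one, Matrix.diagonal_mul_diagonal]
          congr 2
          funext i
          simp [sq]
  have htrace_a : (S * S * P).trace = ∑ i, d i ^ 2 * cf i := by
    rw [hSS]
    have e1 : V * Matrix.diagonal (fun i => d i ^ 2) * Vᵀ * P
        = (V * Matrix.diagonal (fun i => d i ^ 2)) * (Vᵀ * P) := by
      rw [Matrix.mul_assoc]
    rw [e1, Matrix.trace_mul_comm, ← Matrix.mul_assoc, Matrix.trace_mul_comm,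
      trace_diagonal_mul']
  have htrace_b : (S * Y * B * (S * Y)ᵀ).trace = (S * S * P).trace := by
    have hMt : (S * Y)ᵀ = Yᵀ * S := by rw [Matrix.transpose_mul, hSt]
    rw [hMt]
    have e2 : S * Y * B * (Yᵀ * S) = (S * Y * B * Yᵀ) * S := by
      simp only [Matrix.mul_assoc]
    rw [e2, Matrix.trace_mul_comm]
    congr 1
    rw [hP]
    simp only [Matrix.mul_assoc]
  have hbound : (S * Y * B * (S * Y)ᵀ).trace ≤ δ ^ 2 := by
    have hdiag : ∀ i, (S * Y * B * (S * Y)ᵀ) i i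
        ≤ (aOpNorm A / γ) ^ 2 * ∑ j, (S * Y) i j ^ 2 := by
      intro i
      rw [diag_conj]
      exact hBquad _
    have hsum : (S * Y * B * (S * Y)ᵀ).trace
        ≤ ∑ i, (aOpNorm A / γ) ^ 2 * ∑ j, (S * Y) i j ^ 2 := by
      rw [Matrix.trace]
      exact Finset.sum_le_sum fun i _ => hdiag i
    calc (S * Y * B * (S * Y)ᵀ).trace
        ≤ ∑ i, (aOpNorm A / γ) ^ 2 * ∑ j, (S * Y) i j ^ 2 := hsum
      _ = (aOpNorm A / γ) ^ 2 * ∑ i, ∑ j, (S * Y) i j ^ 2 := by rw [← Finset.mul_sum]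
      _ ≤ (aOpNorm A / γ) ^ 2 * ε₁ ^ 2 := by
          apply mul_le_mul_of_nonneg_left _ (by positivity)
          rw [← frob_sq]
          exact pow_le_pow_left₀ (frob_nonneg _) hcrit1 2
      _ = δ ^ 2 := by rw [hδ]; ring
  have hkey : ∑ i, d i ^ 2 * cf i ≤ δ ^ 2 := by
    rw [← htrace_a, ← htrace_b]
    exact hbound
  -- select the p indices to drop
  obtain ⟨J, hJcard, hJle⟩ := lp_select hpn (fun i => d i ^ 2) cf
    (fun i => sq_nonneg (d i)) hc0 hc1 hsumc
  have hJsum : ∑ i ∈ J, d i ^ 2 ≤ δ ^ 2 := le_trans hJle hkey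
  -- construct W and E
  set w : Fin n → ℝ := fun i => if i ∈ J then 0 else d i with hw
  set ee : Fin n → ℝ := fun i => if i ∈ J then d i else 0 with hee
  refine ⟨V * Matrix.diagonal w * Vᵀ, V * Matrix.diagonal ee * Vᵀ, lam, ?_, ?_, ?_, hlam, ?_⟩
  · show (V * Matrix.diagonal w * Vᵀ)ᵀ = V * Matrix.diagonal w * Vᵀ
    rw [Matrix.transpose_mul, Matrix.transpose_mul, Matrix.transpose_transpose,
      Matrix.diagonal_transpose, ← Matrix.mul_assoc]
  · have h1 : (V * Matrix.diagonal w * Vᵀ).rank ≤ (Matrix.diagonal w).rank :=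
      le_trans (Matrix.rank_mul_le_left _ _) (Matrix.rank_mul_le_right _ _)
    have h2 : (Matrix.diagonal w).rank = Fintype.card {i // w i ≠ 0} :=
      Matrix.rank_diagonal w
    have h3 : Fintype.card {i // w i ≠ 0} ≤ (Jᶜ : Finset (Fin n)).card := by
      rw [Fintype.card_subtype]
      apply Finset.card_le_card
      intro i hi
      rw [Finset.mem_filter] at hi
      rw [Finset.mem_compl]
      intro hiJ
      exact hi.2 (by simp [hw, hiJ])
    have h4 : (Jᶜ : Finset (Fin n)).card = n - p := by
      rw [Finset.card_compl, hJcard]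
      simp
    omega
  · apply frob_le_of_sq_le hδ0
    rw [← frob_sq]
    have hEt : (V * Matrix.diagonal ee * Vᵀ)ᵀ = V * Matrix.diagonal ee * Vᵀ := by
      rw [Matrix.transpose_mul, Matrix.transpose_mul, Matrix.transpose_transpose,
        Matrix.diagonal_transpose, ← Matrix.mul_assoc]
    have hEE : (V * Matrix.diagonal ee * Vᵀ) * (V * Matrix.diagonal ee * Vᵀ)
        = V * Matrix.diagonal (fun i => ee i * ee i) * Vᵀ := by
      calc (V * Matrix.diagonal ee * Vᵀ) * (V * Matrix.diagonal ee * Vᵀ)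
          = V * (Matrix.diagonal ee * (Vᵀ * V) * Matrix.diagonal ee) * Vᵀ := by
            simp only [Matrix.mul_assoc]
        _ = V * Matrix.diagonal (fun i => ee i * ee i) * Vᵀ := by
            rw [hV1, Matrix.mul_one, Matrix.diagonal_mul_diagonal]
    have hfs : frob (V * Matrix.diagonal ee * Vᵀ) ^ 2 = ∑ i ∈ J, d i ^ 2 := by
      rw [frob_sq, ← trace_transpose_mul_self, hEt, hEE]
      have e3 : (V * Matrix.diagonal (fun i => ee i * ee i) * Vᵀ).trace
          = (Matrix.diagonal (fun i => ee i * ee i)).trace := by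
        rw [Matrix.mul_assoc, Matrix.trace_mul_comm, Matrix.mul_assoc, hV1,
          Matrix.mul_one]
      rw [e3, Matrix.trace_diagonal]
      have e4 : ∀ i, ee i * ee i = if i ∈ J then d i ^ 2 else 0 := by
        intro i
        simp only [hee]
        split_ifs <;> ring
      rw [Finset.sum_congr rfl fun i _ => e4 i, Finset.sum_ite_mem, Finset.univ_inter]
    rw [hfs]
    exact hJsum
  · have hWE : V * Matrix.diagonal w * Vᵀ + V * Matrix.diagonal ee * Vᵀ = S := by
      have hDsum : Matrix.diagonal w + Matrix.diagonal ee = Matrix.diagonal d := by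
        rw [Matrix.diagonal_add]
        have hfun : (fun i => w i + ee i) = d := by
          funext i
          simp only [hw, hee]
          split_ifs <;> ring
        rw [hfun]
      rw [← Matrix.add_mul, ← Matrix.mul_add, hDsum, ← hspec]
    rw [hWE, hSdef]
    abel
end

section
/- Let c ≤ k be positive integers and let D ≥ 1, δ > 0, σ > 0 be real numbers such that 4ekDδ/(cσ) ≤ 1 and kδ/σ ≤ 1. Then 4 ∑_{i=c}^{k} binom(k,i) (2Dδ/σ)^i (1 + δ/σ)^{k−i} ≤ 8e (2ekDδ/(cσ))^c. -/
/-!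
Bound `C(k,i) ≤ (ek/i)^i` and `(1 + δ/σ)^(k-i) ≤ e^(kδ/σ) ≤ e`: the `i`-th term is then at most
`e x^i` with `x = 2ekDδ/(cσ)`, since `i ≥ c`. The first hypothesis says `x ≤ 1/2`, so the sum
is dominated by the geometric series `e x^c / (1 - x) ≤ 2e x^c`.
-/

open Real Finset

theorem Nat.choose_le_exp_one_mul_div_pow (n i : ℕ) :
    (n.choose i : ℝ) ≤ (exp 1 * n / i) ^ i := by
  rcases Nat.eq_zero_or_pos i with rfl | hi
  · simp
  have hi' : (0 : ℝ) < i := by exact_mod_cast hi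
  calc (n.choose i : ℝ) ≤ (n : ℝ) ^ i / i.factorial := Nat.choose_le_pow_div i n
    _ = ((n : ℝ) / i) ^ i * ((i : ℝ) ^ i / i.factorial) := by
      rw [div_pow]; field_simp
    _ ≤ ((n : ℝ) / i) ^ i * exp i := by
      gcongr; exact pow_div_factorial_le_exp _ hi'.le i
    _ = (exp 1 * n / i) ^ i := by
      rw [mul_div_assoc, mul_pow, exp_one_pow, mul_comm]

theorem one_add_pow_le_exp_mul {t : ℝ} (ht : -1 ≤ t) (m : ℕ) : (1 + t) ^ m ≤ exp (m * t) := by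
  rw [exp_nat_mul]
  exact pow_le_pow_left₀ (by linarith) (by linarith [add_one_le_exp t]) m

theorem choose_mul_pow_mul_one_add_pow_le {a t : ℝ} (ha : 0 ≤ a) (ht : 0 ≤ t) {k : ℕ}
    (hkt : k * t ≤ 1) (i : ℕ) :
    (k.choose i : ℝ) * a ^ i * (1 + t) ^ (k - i) ≤ exp 1 * (exp 1 * k * a / i) ^ i := by
  have hpow : (1 + t) ^ (k - i) ≤ exp 1 := by
    refine (one_add_pow_le_exp_mul (by linarith) _).trans (exp_le_exp.mpr ?_)
    have : ((k - i : ℕ) : ℝ) ≤ k := by exact_mod_cast Nat.sub_le k i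
    nlinarith
  calc (k.choose i : ℝ) * a ^ i * (1 + t) ^ (k - i)
      ≤ (exp 1 * k / i) ^ i * a ^ i * exp 1 := by
        gcongr; exact Nat.choose_le_exp_one_mul_div_pow k i
    _ = exp 1 * (exp 1 * k * a / i) ^ i := by
        rw [← mul_pow, div_mul_eq_mul_div, mul_div_right_comm]; ring

theorem sum_Icc_pow_le_two_mul_pow {x : ℝ} (hx₀ : 0 ≤ x) (hx : x ≤ 1 / 2) (c k : ℕ) :
    ∑ i ∈ Icc c k, x ^ i ≤ 2 * x ^ c := by
  rw [← Ico_add_one_right_eq_Icc]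
  calc ∑ i ∈ Ico c (k + 1), x ^ i ≤ x ^ c / (1 - x) := geom_sum_Ico_le_of_lt_one hx₀ (by linarith)
    _ ≤ 2 * x ^ c := by
      rw [div_le_iff₀ (by linarith)]; nlinarith [pow_nonneg hx₀ c]

theorem tube_volume_estimate_general (c k : ℕ) (hc : 0 < c)
    (D δ σ : ℝ) (hD : 1 ≤ D) (hδ : 0 < δ) (hσ : 0 < σ)
    (h1 : 4 * Real.exp 1 * k * D * δ / (c * σ) ≤ 1)
    (h2 : k * δ / σ ≤ 1) :
    4 * ∑ i ∈ Finset.Icc c k,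
        (k.choose i : ℝ) * (2 * D * δ / σ) ^ i * (1 + δ / σ) ^ (k - i)
      ≤ 8 * Real.exp 1 * (2 * Real.exp 1 * k * D * δ / (c * σ)) ^ c := by
  set x := 2 * exp 1 * k * D * δ / (c * σ)
  have hc' : (0 : ℝ) < c := by exact_mod_cast hc
  have hx₀ : 0 ≤ x := by positivity
  have hx : x ≤ 1 / 2 := by
    have : 2 * x = 4 * exp 1 * k * D * δ / (c * σ) := by ring
    linarith
  have hterm : ∀ i ∈ Icc c k,
      (k.choose i : ℝ) * (2 * D * δ / σ) ^ i * (1 + δ / σ) ^ (k - i) ≤ exp 1 * x ^ i := by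
    intro i hi
    have hci : (c : ℝ) ≤ i := by exact_mod_cast (mem_Icc.mp hi).1
    refine (choose_mul_pow_mul_one_add_pow_le (by positivity) (by positivity)
      (by rwa [← mul_div_assoc]) i).trans ?_
    have hbase : exp 1 * k * (2 * D * δ / σ) / i = x * c / i := by
      simp only [x]; field_simp
    gcongr
    rw [hbase, div_le_iff₀ (hc'.trans_le hci)]
    gcongr
  calc 4 * ∑ i ∈ Icc c k, (k.choose i : ℝ) * (2 * D * δ / σ) ^ i * (1 + δ / σ) ^ (k - i)
      ≤ 4 * ∑ i ∈ Icc c k, exp 1 * x ^ i := by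
        gcongr 4 * ?_; exact sum_le_sum hterm
    _ = 4 * (exp 1 * ∑ i ∈ Icc c k, x ^ i) := by rw [← mul_sum]
    _ ≤ 4 * (exp 1 * (2 * x ^ c)) := by
        gcongr; exact sum_Icc_pow_le_two_mul_pow hx₀ hx c k
    _ = 8 * exp 1 * x ^ c := by ring

/-- The elementary tube-volume estimate: for positive integers `c ≤ k` and
reals `D ≥ 1`, `δ > 0`, `σ > 0` with `4ekDδ/(cσ) ≤ 1` and `kδ/σ ≤ 1`,
`4 ∑_{i=c}^{k} C(k,i) (2Dδ/σ)^i (1 + δ/σ)^{k−i} ≤ 8e (2ekDδ/(cσ))^c`. -/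
theorem tube_volume_estimate (c k : ℕ) (hc : 0 < c) (hck : c ≤ k)
    (D δ σ : ℝ) (hD : 1 ≤ D) (hδ : 0 < δ) (hσ : 0 < σ)
    (h1 : 4 * Real.exp 1 * k * D * δ / (c * σ) ≤ 1)
    (h2 : k * δ / σ ≤ 1) :
    4 * ∑ i ∈ Finset.Icc c k,
        (k.choose i : ℝ) * (2 * D * δ / σ) ^ i * (1 + δ / σ) ^ (k - i)
      ≤ 8 * Real.exp 1 * (2 * Real.exp 1 * k * D * δ / (c * σ)) ^ c :=
  tube_volume_estimate_general c k hc D δ σ hD hδ hσ h1 h2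
end

section
/- Let f : ℝ^n → ℝ and h : ℝ^n → ℝ^m be twice continuously differentiable, t ∈ ℝ, and y ∈ ℝ^n with f(y) ≠ t. Set α := (f(y) − t)^{-1} and λ := α·h(y) ∈ ℝ^m, and let L(·,λ) = f + λ·h be the Lagrangian and μ_t = (f − t)² + ‖h‖². Then ∇_y L(y,λ) = (α/2)∇μ_t(y), and ∇²_{yy} L(y,λ) = α( (1/2)∇²μ_t(y) − J̃ᵀJ̃ ), where J̃ ∈ ℝ^{(1+m)×n} is the augmented Jacobian whose rows are ∇f(y)ᵀ and the rows of the Jacobian ∇h(y). -/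
open RealInnerProductSpace
open InnerProductSpace

set_option linter.unusedSectionVars false

section Aux

variable {X Y : Type*} [NormedAddCommGroup X] [InnerProductSpace ℝ X] [CompleteSpace X]
  [NormedAddCommGroup Y] [InnerProductSpace ℝ Y] [CompleteSpace Y]

lemma td_comp (T : X →L[ℝ] Y) (v : Y) :
    (toDual ℝ X).symm ((innerSL ℝ v).comp T) = ContinuousLinearMap.adjoint T v := by
  apply ext_inner_right ℝ
  intro u
  rw [toDual_symm_apply, ContinuousLinearMap.adjoint_inner_left]
  rfl

lemma hasFDerivAt_lagrangian {f : X → ℝ} {h : X → Y} (lam : Y) {x : X}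
    (hfx : DifferentiableAt ℝ f x) (hhx : DifferentiableAt ℝ h x) :
    HasFDerivAt (fun x => f x + ⟪lam, h x⟫)
      (fderiv ℝ f x + (innerSL ℝ lam).comp (fderiv ℝ h x)) x := by
  exact hfx.hasFDerivAt.add ((innerSL ℝ lam).hasFDerivAt.comp x hhx.hasFDerivAt)

lemma hasFDerivAt_mu {f : X → ℝ} {h : X → Y} (t : ℝ) {x : X}
    (hfx : DifferentiableAt ℝ f x) (hhx : DifferentiableAt ℝ h x) :
    HasFDerivAt (fun x => (f x - t) ^ 2 + ‖h x‖ ^ 2)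
      ((2 * (f x - t)) • fderiv ℝ f x
        + (2 : ℝ) • ((innerSL ℝ (h x)).comp (fderiv ℝ h x))) x := by
  have h1 : HasFDerivAt (fun x => (f x - t) ^ 2) ((2 * (f x - t)) • fderiv ℝ f x) x := by
    have H := (hfx.hasFDerivAt.sub_const t).mul (hfx.hasFDerivAt.sub_const t)
    have hfun : ((fun x => f x - t) * fun x => f x - t) = fun y => (f y - t) ^ 2 :=
      funext fun y => (sq _).symm
    rw [hfun] at H
    refine H.congr_fderiv ?_
    rw [two_mul, add_smul]
  have h2 : HasFDerivAt (fun x => ‖h x‖ ^ 2)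
      ((2 : ℝ) • ((innerSL ℝ (h x)).comp (fderiv ℝ h x))) x := by
    have H := hhx.hasFDerivAt.inner ℝ hhx.hasFDerivAt
    have hfun : (fun y => ⟪h y, h y⟫) = fun y => ‖h y‖ ^ 2 :=
      funext fun y => real_inner_self_eq_norm_sq _
    rw [hfun] at H
    refine H.congr_fderiv ?_
    ext u
    simp [fderivInnerCLM_apply, real_inner_comm]
    exact (two_mul _).symm
  exact h1.add h2

/-- The inverse of `toDual` as a genuinely `ℝ`-linear isometry equivalence. -/
noncomputable def tdIso (X : Type*) [NormedAddCommGroup X] [InnerProductSpace ℝ X]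
    [CompleteSpace X] : StrongDual ℝ X ≃ₗᵢ[ℝ] X :=
  (toDual ℝ X).symm

lemma tdIso_apply (c : StrongDual ℝ X) : tdIso X c = (toDual ℝ X).symm c := rfl

lemma tdIsoCLM_apply (c : StrongDual ℝ X) :
    ((tdIso X : StrongDual ℝ X →L[ℝ] X)) c = (toDual ℝ X).symm c := rfl

lemma fderiv_gradient_eq {φ : X → ℝ} {y : X} {D : X →L[ℝ] (X →L[ℝ] ℝ)}
    (hD : HasFDerivAt (fderiv ℝ φ) D y) :
    fderiv ℝ (gradient φ) y
      = ((tdIso X) : StrongDual ℝ X →L[ℝ] X).comp D := by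
  have h1 : gradient φ = ⇑(tdIso X) ∘ (fderiv ℝ φ) := rfl
  rw [h1, LinearIsometryEquiv.comp_fderiv, hD.fderiv]

set_option maxHeartbeats 2000000 in
theorem main_general (f : X → ℝ) (h : X → Y)
    (hf : ContDiff ℝ 2 f) (hh : ContDiff ℝ 2 h)
    (t : ℝ) (y : X) (hft : f y ≠ t)
    (α : ℝ) (hα : α = (f y - t)⁻¹)
    (lam : Y) (hlam : lam = α • h y) :
    gradient (fun x => f x + ⟪lam, h x⟫) y
      = (α / 2) • gradient (fun x => (f x - t) ^ 2 + ‖h x‖ ^ 2) y ∧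
    fderiv ℝ (gradient (fun x => f x + ⟪lam, h x⟫)) y
      = α • ((1 / 2 : ℝ) • fderiv ℝ (gradient (fun x => (f x - t) ^ 2 + ‖h x‖ ^ 2)) y
          - ((fderiv ℝ f y).smulRight (gradient f y)
            + (ContinuousLinearMap.adjoint (fderiv ℝ h y)).comp (fderiv ℝ h y))) := by
  have hsub : f y - t ≠ 0 := sub_ne_zero.mpr hft
  have hα1 : α * (f y - t) = 1 := by rw [hα]; field_simp
  have hfd : Differentiable ℝ f := hf.differentiable (by norm_num)
  have hhd : Differentiable ℝ h := hh.differentiable (by norm_num)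
  have hfd1 : Differentiable ℝ (fderiv ℝ f) :=
    (hf.fderiv_right (m := 1) (by norm_num)).differentiable (by norm_num)
  have hhd1 : Differentiable ℝ (fderiv ℝ h) :=
    (hh.fderiv_right (m := 1) (by norm_num)).differentiable (by norm_num)
  set A := fderiv ℝ f y with hA
  set B := fderiv ℝ h y with hB
  set F2 := fderiv ℝ (fderiv ℝ f) y with hF2def
  set H2 := fderiv ℝ (fderiv ℝ h) y with hH2def
  have hF2 : HasFDerivAt (fderiv ℝ f) F2 y := (hfd1 y).hasFDerivAt
  have hH2 : HasFDerivAt (fderiv ℝ h) H2 y := (hhd1 y).hasFDerivAt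
  constructor
  · -- gradient part
    have e1 : gradient (fun x => f x + ⟪lam, h x⟫) y
        = gradient f y + ContinuousLinearMap.adjoint B lam := by
      simp only [gradient]
      rw [(hasFDerivAt_lagrangian lam (hfd y) (hhd y)).fderiv, map_add, td_comp]
    have e2 : gradient (fun x => (f x - t) ^ 2 + ‖h x‖ ^ 2) y
        = (2 * (f y - t)) • gradient f y
          + (2 : ℝ) • ContinuousLinearMap.adjoint B (h y) := by
      simp only [gradient]
      rw [(hasFDerivAt_mu t (hfd y) (hhd y)).fderiv, map_add, map_smul, map_smul, td_comp]
    rw [e1, e2, hlam, map_smul]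
    match_scalars
    · linear_combination -hα1
    · ring
  · -- Hessian part
    set Θ : Y →L[ℝ] ((X →L[ℝ] Y) →L[ℝ] (X →L[ℝ] ℝ)) :=
      (ContinuousLinearMap.compL ℝ X Y ℝ).comp (innerSL ℝ : Y →L[ℝ] Y →L[ℝ] ℝ) with hΘ
    have hΘapp : ∀ (v : Y) (T : X →L[ℝ] Y), Θ v T = (innerSL ℝ v).comp T := fun _ _ => rfl
    have hDg : fderiv ℝ (fun x => f x + ⟪lam, h x⟫)
        = fun x => fderiv ℝ f x + Θ lam (fderiv ℝ h x) := by
      funext x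
      rw [(hasFDerivAt_lagrangian lam (hfd x) (hhd x)).fderiv, hΘapp]
    have hg2 : HasFDerivAt (fderiv ℝ (fun x => f x + ⟪lam, h x⟫))
        (F2 + (Θ lam).comp H2) y := by
      rw [hDg]
      exact hF2.add ((Θ lam).hasFDerivAt.comp y hH2)
    have hDμ : fderiv ℝ (fun x => (f x - t) ^ 2 + ‖h x‖ ^ 2)
        = fun x => (2 * (f x - t)) • fderiv ℝ f x + (2 : ℝ) • (Θ (h x) (fderiv ℝ h x)) := by
      funext x
      rw [(hasFDerivAt_mu t (hfd x) (hhd x)).fderiv, hΘapp]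
    have hc : HasFDerivAt (fun x => (2 : ℝ) * (f x - t)) ((2 : ℝ) • A) y :=
      ((hfd y).hasFDerivAt.sub_const t).const_mul 2
    have hterm1 : HasFDerivAt (fun x => (2 * (f x - t)) • fderiv ℝ f x)
        ((2 * (f y - t)) • F2 + ((2 : ℝ) • A).smulRight A) y := hc.smul hF2
    have hΘd : HasFDerivAt (⇑Θ) Θ (h y) := by
      apply ContinuousLinearMap.hasFDerivAt
    have hcΘ : HasFDerivAt (fun x => Θ (h x)) (Θ.comp B) y := by
      show HasFDerivAt (⇑Θ ∘ h) (Θ.comp B) y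
      exact HasFDerivAt.comp (f := h) (g := ⇑Θ) (g' := Θ) y hΘd (hhd y).hasFDerivAt
    have hterm2 : HasFDerivAt (fun x => Θ (h x) (fderiv ℝ h x))
        ((Θ (h y)).comp H2 + (Θ.comp B).flip B) y := hcΘ.clm_apply hH2
    have hμ2 : HasFDerivAt (fderiv ℝ (fun x => (f x - t) ^ 2 + ‖h x‖ ^ 2))
        (((2 * (f y - t)) • F2 + ((2 : ℝ) • A).smulRight A)
          + (2 : ℝ) • ((Θ (h y)).comp H2 + (Θ.comp B).flip B)) y := by
      rw [hDμ]
      exact hterm1.add (hterm2.const_smul (2 : ℝ))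
    rw [fderiv_gradient_eq hg2, fderiv_gradient_eq hμ2]
    ext u
    have tdA : (toDual ℝ X).symm A = gradient f y := rfl
    simp only [ContinuousLinearMap.coe_comp', Function.comp_apply,
      ContinuousLinearMap.add_apply, ContinuousLinearMap.smul_apply,
      ContinuousLinearMap.coe_smul', Pi.smul_apply,
      ContinuousLinearMap.smulRight_apply, ContinuousLinearMap.flip_apply,
      ContinuousLinearMap.sub_apply, ContinuousLinearMap.comp_apply,
      tdIsoCLM_apply, map_add, map_smul, smul_eq_mul]
    simp only [hΘapp, td_comp, tdA, hlam, map_smul, ContinuousLinearMap.smul_apply]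
    match_scalars
    · linear_combination -hα1
    · ring
    · ring
    · ring

end Aux

/-- For twice continuously differentiable `f : ℝ^n → ℝ`, `h : ℝ^n → ℝ^m`,
`t ∈ ℝ`, `y` with `f(y) ≠ t`, `α = (f(y) − t)⁻¹` and `λ = α h(y)`, the Lagrangian
`L(·,λ) = f + λ·h` and the least squares function `μ_t = (f − t)² + ‖h‖²` satisfy
`∇_y L(y,λ) = (α/2) ∇μ_t(y)` and `∇²_{yy} L(y,λ) = α((1/2)∇²μ_t(y) − J̃ᵀJ̃)`, where
`J̃ᵀJ̃ : u ↦ (∇f(y)·u) ∇f(y) + (∇h(y))ᵀ(∇h(y) u)` is the Gram operator of the augmented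
Jacobian with rows `∇f(y)ᵀ` and `∇h(y)`. -/
theorem lagrangian_vs_least_squares_derivatives {n m : ℕ}
    (f : EuclideanSpace ℝ (Fin n) → ℝ)
    (h : EuclideanSpace ℝ (Fin n) → EuclideanSpace ℝ (Fin m))
    (hf : ContDiff ℝ 2 f) (hh : ContDiff ℝ 2 h)
    (t : ℝ) (y : EuclideanSpace ℝ (Fin n)) (hft : f y ≠ t)
    (α : ℝ) (hα : α = (f y - t)⁻¹)
    (lam : EuclideanSpace ℝ (Fin m)) (hlam : lam = α • h y) :
    gradient (fun x => f x + ⟪lam, h x⟫) y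
      = (α / 2) • gradient (fun x => (f x - t) ^ 2 + ‖h x‖ ^ 2) y ∧
    fderiv ℝ (gradient (fun x => f x + ⟪lam, h x⟫)) y
      = α • ((1 / 2 : ℝ) • fderiv ℝ (gradient (fun x => (f x - t) ^ 2 + ‖h x‖ ^ 2)) y
          - ((fderiv ℝ f y).smulRight (gradient f y)
            + (ContinuousLinearMap.adjoint (fderiv ℝ h y)).comp (fderiv ℝ h y))) :=
  main_general f h hf hh t y hft α hα lam hlam
end
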